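/- arXiv:1903.02603 — 4 statements merged into one kernel-verified Lean document; each statement's English description precedes it below -/
import Mathlib

section
/- Let J be a finite index set with |J| ≥ 2, let β > 0 and set Δ := (log |J|)/β. Let g : ℝ → ℝ satisfy 0 ≤ g ≤ 1, g(x) = 0 for all x ≤ −Δ, and g(x) = 1 for all x ≥ Δ. Then for every w ∈ ℝ^J one has g(F_β(w − 2Δ·𝟙)) ≤ 𝟙{max_{j∈J} w_j ≥ 0} ≤ g(F_β(w + 2Δ·𝟙)), where 𝟙 denotes the all-ones vector of ℝ^J and 𝟙{·} the indicator. -/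
open Finset

/-- **Smoothing lemma.** Let `J` be finite with `|J| ≥ 2`, `β > 0`, `Δ = log |J| / β`.
If `g : ℝ → ℝ` satisfies `0 ≤ g ≤ 1`, `g = 0` on `(-∞, -Δ]` and `g = 1` on `[Δ, ∞)`,
then for every `w : J → ℝ`,
`g (F_β (w - 2Δ)) ≤ 𝟙{max_j w j ≥ 0} ≤ g (F_β (w + 2Δ))`,
where `F_β(v) = β⁻¹ log (∑ j, exp (β v j))`. -/
theorem smoothing_indicator_softmax {J : Type*} [Fintype J] [Nonempty J]
    (hJ : 2 ≤ Fintype.card J) (β : ℝ) (hβ : 0 < β)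
    (g : ℝ → ℝ) (hg0 : ∀ x, 0 ≤ g x) (hg1 : ∀ x, g x ≤ 1)
    (hgle : ∀ x, x ≤ -(Real.log (Fintype.card J) / β) → g x = 0)
    (hgge : ∀ x, Real.log (Fintype.card J) / β ≤ x → g x = 1)
    (w : J → ℝ) :
    g (β⁻¹ * Real.log (∑ j : J,
        Real.exp (β * (w j - 2 * (Real.log (Fintype.card J) / β)))))
      ≤ (if 0 ≤ Finset.univ.sup' Finset.univ_nonempty w then (1 : ℝ) else 0) ∧
    (if 0 ≤ Finset.univ.sup' Finset.univ_nonempty w then (1 : ℝ) else 0)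
      ≤ g (β⁻¹ * Real.log (∑ j : J,
        Real.exp (β * (w j + 2 * (Real.log (Fintype.card J) / β))))) := by
  set N : ℝ := (Fintype.card J : ℝ) with hNdef
  have hN1 : (1 : ℝ) ≤ N := by
    have h2 : (2 : ℝ) ≤ N := by rw [hNdef]; exact_mod_cast hJ
    linarith
  have hlogN : 0 ≤ Real.log N := Real.log_nonneg hN1
  set Δ : ℝ := Real.log N / β with hΔdef
  have hΔ0 : 0 ≤ Δ := div_nonneg hlogN hβ.le
  set M : ℝ := Finset.univ.sup' Finset.univ_nonempty w with hMdef
  obtain ⟨j₀, -, hj₀⟩ := Finset.exists_mem_eq_sup' Finset.univ_nonempty w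
  have hle : ∀ j : J, w j ≤ M := fun j => Finset.le_sup' w (Finset.mem_univ j)
  by_cases hM : 0 ≤ M
  · rw [if_pos hM]
    refine ⟨hg1 _, ?_⟩
    have hterm : Real.exp (β * (M + 2 * Δ)) ≤
        ∑ j : J, Real.exp (β * (w j + 2 * Δ)) := by
      have hMj : M = w j₀ := hj₀
      rw [hMj]
      exact Finset.single_le_sum (f := fun j => Real.exp (β * (w j + 2 * Δ)))
        (fun j _ => (Real.exp_pos _).le) (Finset.mem_univ j₀)
    have hsum_pos : 0 < ∑ j : J, Real.exp (β * (w j + 2 * Δ)) :=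
      Finset.sum_pos (fun j _ => Real.exp_pos _) Finset.univ_nonempty
    have hlog : β * (M + 2 * Δ) ≤
        Real.log (∑ j : J, Real.exp (β * (w j + 2 * Δ))) := by
      have := Real.log_le_log (Real.exp_pos _) hterm
      rwa [Real.log_exp] at this
    have hF : Δ ≤ β⁻¹ * Real.log (∑ j : J, Real.exp (β * (w j + 2 * Δ))) := by
      have h2 : M + 2 * Δ ≤ β⁻¹ * Real.log (∑ j : J, Real.exp (β * (w j + 2 * Δ))) := by
        have h3 := mul_le_mul_of_nonneg_left hlog (inv_nonneg.mpr hβ.le)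
        rwa [inv_mul_cancel_left₀ hβ.ne'] at h3
      linarith
    rw [hgge _ hF]
  · rw [if_neg hM]
    push_neg at hM
    refine ⟨?_, hg0 _⟩
    have hsum : ∑ j : J, Real.exp (β * (w j - 2 * Δ)) ≤ N * Real.exp (β * (M - 2 * Δ)) := by
      calc ∑ j : J, Real.exp (β * (w j - 2 * Δ))
          ≤ ∑ _j : J, Real.exp (β * (M - 2 * Δ)) := by
            apply Finset.sum_le_sum
            intro j _
            exact Real.exp_le_exp.mpr (by nlinarith [hle j])
        _ = N * Real.exp (β * (M - 2 * Δ)) := by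
            rw [Finset.sum_const, Finset.card_univ, nsmul_eq_mul]
    have hsum_pos : 0 < ∑ j : J, Real.exp (β * (w j - 2 * Δ)) :=
      Finset.sum_pos (fun j _ => Real.exp_pos _) Finset.univ_nonempty
    have hlog : Real.log (∑ j : J, Real.exp (β * (w j - 2 * Δ)))
        ≤ Real.log N + β * (M - 2 * Δ) := by
      have := Real.log_le_log hsum_pos hsum
      rwa [Real.log_mul (by linarith) (Real.exp_ne_zero _), Real.log_exp] at this
    have hF : β⁻¹ * Real.log (∑ j : J, Real.exp (β * (w j - 2 * Δ))) ≤ -Δ := by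
      have h1 : β⁻¹ * Real.log (∑ j : J, Real.exp (β * (w j - 2 * Δ)))
          ≤ β⁻¹ * (Real.log N + β * (M - 2 * Δ)) :=
        mul_le_mul_of_nonneg_left hlog (inv_nonneg.mpr hβ.le)
      have h2 : β⁻¹ * (Real.log N + β * (M - 2 * Δ)) = Δ + (M - 2 * Δ) := by
        rw [hΔdef]; field_simp
      rw [h2] at h1
      linarith
    rw [hgle _ hF]
end

section
/- Fix N ∈ ℕ, an even window size n = 2m with n ≤ N, and i ∈ {1,…,n}, and let I_i := {j ∈ {1,…,N} : j ≡ i (mod n)}. Let β > 0. Let x̊, X̊ ∈ ℝ^N be vectors vanishing on the coordinates in I_i, and let a, b ∈ ℝ^N be vectors supported on I_i. Define φ(a, b) := F_β( Q(x̊ + a, X̊ + b) ), the soft-max over J of the quadratic-form statistics. Suppose L > 0 satisfies max_{j∈J} ‖E(j) (x̊ + a)_n(j)‖_∞ ≤ L at the point (a, b) under consideration, and set 𝔏 := max( 2L, max_{j∈J} ‖D(j)‖_∞ ). Then at that point: (i) | Σ_{j∈I_i} (∂_{a_j} + ∂_{b_j}) φ(a,b) | ≤ 2𝔏/√n; (ii)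 | Σ_{j,j′∈I_i} (∂²_{a_j a_{j′}} + ∂²_{b_j b_{j′}}) φ(a,b) | ≤ 4β𝔏²/n; (iii) | Σ_{j,j′,j″∈I_i} (∂³_{a_j a_{j′} a_{j″}} + ∂³_{b_j b_{j′} b_{j″}}) φ(a,b) | ≤ 12β²𝔏³/n^{3/2}. -/
open Finset

/-- The window of `n = 2m` consecutive indices `{j-m+1, …, j+m}` centered at `j`. -/
def window (m j : ℕ) : Finset ℕ := Finset.Icc (j - m + 1) (j + m)

/-- The local quadratic-form statistics
`Q(x, X)_j = n^{-1/2} ⟨x_n(j), E(j) x_n(j)⟩ + n^{-1/2} ⟨D(j), X_n(j)⟩`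
(matrices indexed by absolute coordinates, window size `n = 2m`). -/
noncomputable def Qstat (m : ℕ) (E : ℕ → ℕ → ℕ → ℝ) (D : ℕ → ℕ → ℝ)
    (x X : ℕ → ℝ) (j : ℕ) : ℝ :=
  (∑ k ∈ window m j, ∑ l ∈ window m j, E j k l * x k * x l) / Real.sqrt (2 * m)
    + (∑ k ∈ window m j, D j k * X k) / Real.sqrt (2 * m)

/-- The soft-max `F_β(w) = β⁻¹ log (∑_{j ∈ J} exp (β w_j))`. -/
noncomputable def softmax (β : ℝ) (J : Finset ℕ) (w : ℕ → ℝ) : ℝ :=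
  β⁻¹ * Real.log (∑ j ∈ J, Real.exp (β * w j))

/-- Indicator (as a real-valued vector) of the arithmetic-progression block
`I_i = {j ∈ {1,…,N} : j ≡ i (mod n)}`. -/
noncomputable def indChar (N n i : ℕ) : ℕ → ℝ :=
  fun j => if 1 ≤ j ∧ j ≤ N ∧ j % n = i % n then 1 else 0


/-! ### Auxiliary machinery -/

noncomputable def gA (β : ℝ) (J : Finset ℕ) (w v : ℕ → ℝ) (r : ℕ) (s : ℝ) : ℝ :=
  ∑ j ∈ J, v j ^ r * Real.exp (β * (w j + s * v j))

lemma gA_hasDeriv (β : ℝ) (J : Finset ℕ) (w v : ℕ → ℝ) (r : ℕ) (s : ℝ) :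
    HasDerivAt (fun t => gA β J w v r t) (β * gA β J w v (r+1) s) s := by
  have h : ∀ j ∈ J, HasDerivAt (fun t => v j ^ r * Real.exp (β * (w j + t * v j)))
      (β * (v j ^ (r+1) * Real.exp (β * (w j + s * v j)))) s := by
    intro j _
    have h1 : HasDerivAt (fun t : ℝ => β * (w j + t * v j)) (β * v j) s := by
      simpa using (((hasDerivAt_id s).mul_const (v j)).const_add (w j)).const_mul β
    have h2 := (h1.exp).const_mul (v j ^ r)
    refine h2.congr_deriv ?_
    ring
  have := HasDerivAt.fun_sum h
  simpa [gA, Finset.mul_sum] using this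

lemma gA_pos (β : ℝ) (J : Finset ℕ) (hJ : J.Nonempty) (w v : ℕ → ℝ) (s : ℝ) :
    0 < gA β J w v 0 s := by
  unfold gA
  exact Finset.sum_pos (fun j _ => by positivity) hJ

lemma gA_abs_le (β : ℝ) (J : Finset ℕ) (w v : ℕ → ℝ) (V : ℝ) (hV : ∀ j ∈ J, |v j| ≤ V)
    (r : ℕ) (s : ℝ) : |gA β J w v r s| ≤ V ^ r * gA β J w v 0 s := by
  unfold gA
  calc |∑ j ∈ J, v j ^ r * Real.exp (β * (w j + s * v j))|
      ≤ ∑ j ∈ J, |v j ^ r * Real.exp (β * (w j + s * v j))| := Finset.abs_sum_le_sum_abs _ _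
    _ ≤ ∑ j ∈ J, V ^ r * Real.exp (β * (w j + s * v j)) := by
        apply Finset.sum_le_sum
        intro j hj
        rw [abs_mul, abs_of_pos (Real.exp_pos _), abs_pow]
        exact mul_le_mul_of_nonneg_right (pow_le_pow_left₀ (abs_nonneg _) (hV j hj) r)
          (Real.exp_pos _).le
    _ = V ^ r * ∑ j ∈ J, v j ^ 0 * Real.exp (β * (w j + s * v j)) := by
        simp [Finset.mul_sum]

lemma softmax_linear_bounds (β : ℝ) (hβ : 0 < β) (J : Finset ℕ) (hJ : J.Nonempty)
    (w v : ℕ → ℝ) (V : ℝ) (hV : ∀ j ∈ J, |v j| ≤ V) :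
    |deriv (fun s => softmax β J (fun j => w j + s * v j)) 0| ≤ V ∧
    |deriv (deriv (fun s => softmax β J (fun j => w j + s * v j))) 0| ≤ 2 * β * V ^ 2 ∧
    |deriv (deriv (deriv (fun s => softmax β J (fun j => w j + s * v j)))) 0|
      ≤ 6 * β ^ 2 * V ^ 3 := by
  have hVnn : 0 ≤ V := le_trans (abs_nonneg _) (hV hJ.choose hJ.choose_spec)
  set g : ℕ → ℝ → ℝ := gA β J w v with hg
  have hpos : ∀ s, 0 < g 0 s := fun s => gA_pos β J hJ w v s
  have hD : ∀ r s, HasDerivAt (g r) (β * g (r+1) s) s := fun r s => gA_hasDeriv β J w v r s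
  have hB : ∀ r, |g r 0| ≤ V ^ r * g 0 0 := fun r => gA_abs_le β J w v V hV r 0
  have hf : (fun s => softmax β J (fun j => w j + s * v j))
      = fun s => β⁻¹ * Real.log (g 0 s) := by
    funext s
    simp [softmax, hg, gA]
  have hd1 : deriv (fun s => β⁻¹ * Real.log (g 0 s)) = fun s => g 1 s / g 0 s := by
    funext s
    have h := ((hD 0 s).log (hpos s).ne').const_mul β⁻¹
    have h2 : β⁻¹ * (β * g 1 s / g 0 s) = g 1 s / g 0 s := by
      field_simp
    rw [h2] at h
    exact h.deriv
  have hd2 : deriv (fun s => g 1 s / g 0 s)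
      = fun s => β * (g 2 s * g 0 s - g 1 s * g 1 s) / (g 0 s * g 0 s) := by
    funext s
    have h := (hD 1 s).div (hD 0 s) (hpos s).ne'
    have h2 : (β * g 2 s * g 0 s - g 1 s * (β * g 1 s)) / g 0 s ^ 2
        = β * (g 2 s * g 0 s - g 1 s * g 1 s) / (g 0 s * g 0 s) := by
      rw [sq]; ring
    rw [h2] at h
    exact h.deriv
  have hd3 : HasDerivAt (fun s => β * (g 2 s * g 0 s - g 1 s * g 1 s) / (g 0 s * g 0 s))
      (β ^ 2 * (g 3 0 * (g 0 0 * g 0 0) - 3 * (g 1 0 * g 2 0) * g 0 0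
        + 2 * (g 1 0 * (g 1 0 * g 1 0))) / (g 0 0 * (g 0 0 * g 0 0))) 0 := by
    have hnum : HasDerivAt (fun s => β * (g 2 s * g 0 s - g 1 s * g 1 s))
        (β * ((β * g 3 0) * g 0 0 + g 2 0 * (β * g 1 0)
          - ((β * g 2 0) * g 1 0 + g 1 0 * (β * g 2 0)))) 0 :=
      (((hD 2 0).mul (hD 0 0)).sub ((hD 1 0).mul (hD 1 0))).const_mul β
    have hden : HasDerivAt (fun s => g 0 s * g 0 s)
        ((β * g 1 0) * g 0 0 + g 0 0 * (β * g 1 0)) 0 := (hD 0 0).mul (hD 0 0)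
    have h0 : (0:ℝ) < g 0 0 * g 0 0 := mul_pos (hpos 0) (hpos 0)
    have h := hnum.div hden h0.ne'
    refine h.congr_deriv ?_
    have h0' : g 0 0 ≠ 0 := (hpos 0).ne'
    field_simp
    ring
  refine ⟨?_, ?_, ?_⟩
  · rw [hf, hd1]
    rw [abs_div, abs_of_pos (hpos 0), div_le_iff₀ (hpos 0)]
    have := hB 1
    rw [pow_one] at this
    linarith
  · rw [hf, hd1, hd2]
    have hgg : (0:ℝ) < g 0 0 * g 0 0 := mul_pos (hpos 0) (hpos 0)
    rw [abs_div, abs_of_pos hgg, div_le_iff₀ hgg]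
    rw [abs_mul, abs_of_pos hβ]
    have h1 := hB 1; have h2 := hB 2
    rw [pow_one] at h1
    have habs : |g 2 0 * g 0 0 - g 1 0 * g 1 0| ≤ 2 * V ^ 2 * (g 0 0 * g 0 0) := by
      have := abs_sub (g 2 0 * g 0 0) (g 1 0 * g 1 0)
      have e1 : |g 2 0 * g 0 0| ≤ V ^ 2 * g 0 0 * g 0 0 := by
        rw [abs_mul, abs_of_pos (hpos 0)]
        nlinarith [hpos 0]
      have e2 : |g 1 0 * g 1 0| ≤ (V * g 0 0) * (V * g 0 0) := by
        rw [abs_mul]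
        exact mul_le_mul h1 h1 (abs_nonneg _) (mul_nonneg hVnn (hpos 0).le)
      calc |g 2 0 * g 0 0 - g 1 0 * g 1 0| ≤ |g 2 0 * g 0 0| + |g 1 0 * g 1 0| :=
            abs_sub _ _
        _ ≤ 2 * V ^ 2 * (g 0 0 * g 0 0) := by nlinarith
    nlinarith [hβ, abs_nonneg (g 2 0 * g 0 0 - g 1 0 * g 1 0), hpos 0]
  · rw [hf, hd1, hd2, hd3.deriv]
    have h0 := hpos 0
    have hggg : (0:ℝ) < g 0 0 * (g 0 0 * g 0 0) := mul_pos h0 (mul_pos h0 h0)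
    rw [abs_div, abs_of_pos hggg, div_le_iff₀ hggg]
    rw [abs_mul, abs_of_pos (by positivity : (0:ℝ) < β ^ 2)]
    have h1 := hB 1; have h2 := hB 2; have h3 := hB 3
    rw [pow_one] at h1
    have a1 := abs_nonneg (g 1 0); have a2 := abs_nonneg (g 2 0); have a3 := abs_nonneg (g 3 0)
    have habs : |g 3 0 * (g 0 0 * g 0 0) - 3 * (g 1 0 * g 2 0) * g 0 0
        + 2 * (g 1 0 * (g 1 0 * g 1 0))| ≤ 6 * V ^ 3 * (g 0 0 * (g 0 0 * g 0 0)) := by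
      have e3 : |g 3 0 * (g 0 0 * g 0 0)| ≤ V ^ 3 * g 0 0 * (g 0 0 * g 0 0) := by
        rw [abs_mul, abs_of_pos (mul_pos h0 h0)]
        nlinarith
      have e12 : |g 1 0 * g 2 0| ≤ (V * g 0 0) * (V ^ 2 * g 0 0) := by
        rw [abs_mul]
        exact mul_le_mul h1 h2 (abs_nonneg _) (by positivity)
      have e12' : |3 * (g 1 0 * g 2 0) * g 0 0| ≤ 3 * ((V * g 0 0) * (V ^ 2 * g 0 0)) * g 0 0 := by
        rw [abs_mul, abs_mul, abs_of_pos (hpos 0), abs_of_nonneg (by norm_num : (0:ℝ) ≤ 3)]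
        nlinarith
      have e111 : |g 1 0 * (g 1 0 * g 1 0)| ≤ (V * g 0 0) * ((V * g 0 0) * (V * g 0 0)) := by
        rw [abs_mul, abs_mul]
        have hVg : (0:ℝ) ≤ V * g 0 0 := by positivity
        exact mul_le_mul h1 (mul_le_mul h1 h1 (abs_nonneg _) hVg)
          (mul_nonneg (abs_nonneg _) (abs_nonneg _)) hVg
      calc |g 3 0 * (g 0 0 * g 0 0) - 3 * (g 1 0 * g 2 0) * g 0 0
            + 2 * (g 1 0 * (g 1 0 * g 1 0))|
          ≤ |g 3 0 * (g 0 0 * g 0 0) - 3 * (g 1 0 * g 2 0) * g 0 0|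
            + |2 * (g 1 0 * (g 1 0 * g 1 0))| := abs_add_le _ _
        _ ≤ |g 3 0 * (g 0 0 * g 0 0)| + |3 * (g 1 0 * g 2 0) * g 0 0|
            + |2 * (g 1 0 * (g 1 0 * g 1 0))| := by
              have := abs_sub (g 3 0 * (g 0 0 * g 0 0)) (3 * (g 1 0 * g 2 0) * g 0 0)
              linarith
        _ ≤ 6 * V ^ 3 * (g 0 0 * (g 0 0 * g 0 0)) := by
              have e111' : |2 * (g 1 0 * (g 1 0 * g 1 0))|
                  ≤ 2 * ((V * g 0 0) * ((V * g 0 0) * (V * g 0 0))) := by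
                rw [abs_mul, abs_of_nonneg (by norm_num : (0:ℝ) ≤ 2)]
                linarith
              nlinarith [e3, e12', e111']
    nlinarith [abs_nonneg (g 3 0 * (g 0 0 * g 0 0) - 3 * (g 1 0 * g 2 0) * g 0 0
      + 2 * (g 1 0 * (g 1 0 * g 1 0))), pow_pos hβ 2]

lemma indChar_cases (N n i r : ℕ) : indChar N n i r = 0 ∨ indChar N n i r = 1 := by
  unfold indChar; split <;> simp

lemma window_unique (N m i : ℕ) (hm : 0 < m) (j k l : ℕ)
    (hk : k ∈ window m j) (hl : l ∈ window m j)
    (hk1 : indChar N (2*m) i k = 1) (hl1 : indChar N (2*m) i l = 1) : k = l := by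
  unfold indChar at hk1 hl1
  have hkc : k % (2*m) = i % (2*m) := by
    by_contra h
    rw [if_neg (by tauto)] at hk1
    norm_num at hk1
  have hlc : l % (2*m) = i % (2*m) := by
    by_contra h
    rw [if_neg (by tauto)] at hl1
    norm_num at hl1
  unfold window at hk hl
  rw [Finset.mem_Icc] at hk hl
  rcases le_total k l with h | h
  · have hdvd : 2*m ∣ l - k := (Nat.modEq_iff_dvd' h).mp (hkc.trans hlc.symm)
    rcases Nat.eq_zero_or_pos (l - k) with h0 | h0
    · omega
    · exact absurd (Nat.le_of_dvd h0 hdvd) (by omega)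
  · have hdvd : 2*m ∣ k - l := (Nat.modEq_iff_dvd' h).mp (hlc.trans hkc.symm)
    rcases Nat.eq_zero_or_pos (k - l) with h0 | h0
    · omega
    · exact absurd (Nat.le_of_dvd h0 hdvd) (by omega)

lemma sum_indicator_abs_le (W : Finset ℕ) (χ t : ℕ → ℝ)
    (hχ : ∀ r, χ r = 0 ∨ χ r = 1)
    (huniq : ∀ k ∈ W, ∀ l ∈ W, χ k = 1 → χ l = 1 → k = l)
    (L : ℝ) (hL : 0 ≤ L) (ht : ∀ k ∈ W, |t k| ≤ L) :
    |∑ k ∈ W, χ k * t k| ≤ L := by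
  classical
  have hrw : ∑ k ∈ W, χ k * t k = ∑ k ∈ W.filter (fun k => χ k = 1), t k := by
    rw [Finset.sum_filter]
    apply Finset.sum_congr rfl
    intro k _
    rcases hχ k with h | h <;> simp [h]
  rw [hrw]
  rcases Finset.eq_empty_or_nonempty (W.filter (fun k => χ k = 1)) with he | ⟨k0, hk0⟩
  · rw [he]; simpa using hL
  · have hm0 := Finset.mem_filter.mp hk0
    have hsingle : W.filter (fun k => χ k = 1) = {k0} := by
      apply Finset.eq_singleton_iff_unique_mem.mpr
      refine ⟨hk0, fun x hx => ?_⟩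
      have hmx := Finset.mem_filter.mp hx
      exact huniq x hmx.1 k0 hm0.1 hmx.2 hm0.2
    rw [hsingle, Finset.sum_singleton]
    exact ht k0 hm0.1

/-- **Derivative bounds for the soft-max of the quadratic-form statistics.**
With `φ(a,b) = F_β(Q(x̊+a, X̊+b))`, `x̊, X̊` vanishing on the block `I_i`, `a, b`
supported on `I_i`, `max_{j,k} |(E(j)(x̊+a))_k| ≤ L` and
`𝔏 = max(2L, max_j ‖D(j)‖_∞) ≤ Lmax`, the sums over `I_i` of first, second and third
partial derivatives of `φ` (expressed as derivatives along the indicator direction of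
`I_i`, separately in `a` and in `b`) are bounded by `2𝔏/√n`, `4β𝔏²/n` and
`12β²𝔏³/n^{3/2}` respectively. -/
theorem softmax_quadratic_derivative_bounds
    (N m i : ℕ) (hm : 0 < m) (hn : 2 * m ≤ N) (hi1 : 1 ≤ i) (hi2 : i ≤ 2 * m)
    (E : ℕ → ℕ → ℕ → ℝ) (D : ℕ → ℕ → ℝ)
    (hEsymm : ∀ j k l, E j k l = E j l k)
    (hEdiag : ∀ j k, E j k k = 0)
    (β : ℝ) (hβ : 0 < β)
    (x0 X0 a b : ℕ → ℝ)
    (hx0 : ∀ j, indChar N (2 * m) i j = 1 → x0 j = 0)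
    (hX0 : ∀ j, indChar N (2 * m) i j = 1 → X0 j = 0)
    (ha : ∀ j, indChar N (2 * m) i j = 0 → a j = 0)
    (hb : ∀ j, indChar N (2 * m) i j = 0 → b j = 0)
    (L Lmax : ℝ) (hL : 0 < L)
    (hLbound : ∀ j ∈ Finset.Icc m (N - m), ∀ k ∈ window m j,
      |∑ l ∈ window m j, E j k l * (x0 l + a l)| ≤ L)
    (hLmax1 : 2 * L ≤ Lmax)
    (hLmax2 : ∀ j ∈ Finset.Icc m (N - m), ∀ k ∈ window m j, |D j k| ≤ Lmax) :
    |deriv (fun s : ℝ => softmax β (Finset.Icc m (N - m))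
          (Qstat m E D (fun r => x0 r + (a r + s * indChar N (2 * m) i r))
            (fun r => X0 r + b r))) 0
      + deriv (fun s : ℝ => softmax β (Finset.Icc m (N - m))
          (Qstat m E D (fun r => x0 r + a r)
            (fun r => X0 r + (b r + s * indChar N (2 * m) i r)))) 0|
      ≤ 2 * Lmax / Real.sqrt (2 * m) ∧
    |deriv (deriv (fun s : ℝ => softmax β (Finset.Icc m (N - m))
          (Qstat m E D (fun r => x0 r + (a r + s * indChar N (2 * m) i r))
            (fun r => X0 r + b r)))) 0
      + deriv (deriv (fun s : ℝ => softmax β (Finset.Icc m (N - m))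
          (Qstat m E D (fun r => x0 r + a r)
            (fun r => X0 r + (b r + s * indChar N (2 * m) i r))))) 0|
      ≤ 4 * β * Lmax ^ 2 / (2 * m) ∧
    |deriv (deriv (deriv (fun s : ℝ => softmax β (Finset.Icc m (N - m))
          (Qstat m E D (fun r => x0 r + (a r + s * indChar N (2 * m) i r))
            (fun r => X0 r + b r))))) 0
      + deriv (deriv (deriv (fun s : ℝ => softmax β (Finset.Icc m (N - m))
          (Qstat m E D (fun r => x0 r + a r)
            (fun r => X0 r + (b r + s * indChar N (2 * m) i r)))))) 0|
      ≤ 12 * β ^ 2 * Lmax ^ 3 / Real.sqrt (2 * m) ^ 3 := by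

  classical
  set n := 2 * m with hn'
  set χ := indChar N n i with hχdef
  set J := Finset.Icc m (N - m) with hJdef
  set R := Real.sqrt (2 * m) with hRdef
  have hR : (0:ℝ) < R := Real.sqrt_pos.mpr (by positivity)
  have hJne : J.Nonempty := ⟨m, Finset.mem_Icc.mpr ⟨le_refl m, by omega⟩⟩
  have hLmaxpos : (0:ℝ) < Lmax := lt_of_lt_of_le (by linarith) hLmax1
  set y : ℕ → ℝ := fun r => x0 r + a r with hy
  -- direction vectors
  set vA : ℕ → ℝ := fun j => (∑ k ∈ window m j, ∑ l ∈ window m j,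
      E j k l * (χ k * (x0 l + a l) + (x0 k + a k) * χ l)) / R with hvA
  set vB : ℕ → ℝ := fun j => (∑ k ∈ window m j, χ k * D j k) / R with hvB
  set wA : ℕ → ℝ := fun j => Qstat m E D (fun r => x0 r + a r) (fun r => X0 r + b r) j
    with hwA
  -- function identities
  have key_a : (fun s : ℝ => softmax β J
        (Qstat m E D (fun r => x0 r + (a r + s * χ r)) (fun r => X0 r + b r)))
      = fun s => softmax β J (fun j => wA j + s * vA j) := by
    funext s
    unfold softmax
    congr 1
    congr 1
    apply Finset.sum_congr rfl
    intro j _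
    congr 1
    congr 1
    have hcross : ∑ k ∈ window m j, ∑ l ∈ window m j, E j k l * χ k * χ l = 0 := by
      apply Finset.sum_eq_zero
      intro k hk
      apply Finset.sum_eq_zero
      intro l hl
      rcases indChar_cases N n i k with h | h
      · rw [← hχdef] at h; rw [h]; ring
      · rcases indChar_cases N n i l with h' | h'
        · rw [← hχdef] at h'; rw [h']; ring
        · rw [← hχdef] at h h'
          have := window_unique N m i hm j k l hk hl h h'
          subst this
          rw [hEdiag]; ring
    have hnum : ∑ k ∈ window m j, ∑ l ∈ window m j,
          E j k l * (x0 k + (a k + s * χ k)) * (x0 l + (a l + s * χ l))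
        = (∑ k ∈ window m j, ∑ l ∈ window m j, E j k l * (x0 k + a k) * (x0 l + a l))
          + s * (∑ k ∈ window m j, ∑ l ∈ window m j,
              E j k l * (χ k * (x0 l + a l) + (x0 k + a k) * χ l)) := by
      have step : ∑ k ∈ window m j, ∑ l ∈ window m j,
            E j k l * (x0 k + (a k + s * χ k)) * (x0 l + (a l + s * χ l))
          = ∑ k ∈ window m j, ∑ l ∈ window m j,
              (E j k l * (x0 k + a k) * (x0 l + a l)
                + (s * (E j k l * (χ k * (x0 l + a l) + (x0 k + a k) * χ l))
                  + (s * s) * (E j k l * χ k * χ l))) :=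
        Finset.sum_congr rfl fun k _ => Finset.sum_congr rfl fun l _ => by ring
      rw [step]
      simp only [Finset.sum_add_distrib, ← Finset.mul_sum]
      rw [hcross]
      ring
    unfold Qstat
    rw [hnum, hwA, hvA]
    simp only
    unfold Qstat
    rw [← hRdef]
    ring
  have key_b : (fun s : ℝ => softmax β J
        (Qstat m E D (fun r => x0 r + a r) (fun r => X0 r + (b r + s * χ r))))
      = fun s => softmax β J (fun j => wA j + s * vB j) := by
    funext s
    unfold softmax
    congr 1
    congr 1
    apply Finset.sum_congr rfl
    intro j _
    congr 1
    have hnum : ∑ k ∈ window m j, D j k * (X0 k + (b k + s * χ k))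
        = (∑ k ∈ window m j, D j k * (X0 k + b k))
          + s * (∑ k ∈ window m j, χ k * D j k) := by
      have step : ∑ k ∈ window m j, D j k * (X0 k + (b k + s * χ k))
          = ∑ k ∈ window m j, (D j k * (X0 k + b k) + s * (χ k * D j k)) :=
        Finset.sum_congr rfl fun k _ => by ring
      rw [step]
      simp only [Finset.sum_add_distrib, ← Finset.mul_sum]
    unfold Qstat
    rw [hnum, hwA, hvB]
    simp only
    unfold Qstat
    rw [← hRdef]
    ring
  -- bounds on the direction vectors
  have hχc : ∀ r, χ r = 0 ∨ χ r = 1 := fun r => indChar_cases N n i r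
  have hVA : ∀ j ∈ J, |vA j| ≤ Lmax / R := by
    intro j hj
    have huniq : ∀ k ∈ window m j, ∀ l ∈ window m j, χ k = 1 → χ l = 1 → k = l := by
      intro k hk l hl h h'
      exact window_unique N m i hm j k l hk hl h h'
    have hT : |∑ k ∈ window m j, χ k * (∑ l ∈ window m j, E j k l * (x0 l + a l))| ≤ L :=
      sum_indicator_abs_le (window m j) χ _ hχc huniq L hL.le (fun k hk => hLbound j hj k hk)
    have hsplit : ∑ k ∈ window m j, ∑ l ∈ window m j,
          E j k l * (χ k * (x0 l + a l) + (x0 k + a k) * χ l)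
        = 2 * ∑ k ∈ window m j, χ k * (∑ l ∈ window m j, E j k l * (x0 l + a l)) := by
      have e1 : ∑ k ∈ window m j, ∑ l ∈ window m j, E j k l * (χ k * (x0 l + a l))
          = ∑ k ∈ window m j, χ k * (∑ l ∈ window m j, E j k l * (x0 l + a l)) := by
        apply Finset.sum_congr rfl
        intro k _
        rw [Finset.mul_sum]
        exact Finset.sum_congr rfl fun l _ => by ring
      have e2 : ∑ k ∈ window m j, ∑ l ∈ window m j, E j k l * ((x0 k + a k) * χ l)
          = ∑ k ∈ window m j, χ k * (∑ l ∈ window m j, E j k l * (x0 l + a l)) := by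
        rw [Finset.sum_comm]
        apply Finset.sum_congr rfl
        intro l _
        rw [Finset.mul_sum]
        exact Finset.sum_congr rfl fun k _ => by rw [hEsymm j k l]; ring
      calc ∑ k ∈ window m j, ∑ l ∈ window m j,
            E j k l * (χ k * (x0 l + a l) + (x0 k + a k) * χ l)
          = (∑ k ∈ window m j, ∑ l ∈ window m j, E j k l * (χ k * (x0 l + a l)))
            + ∑ k ∈ window m j, ∑ l ∈ window m j, E j k l * ((x0 k + a k) * χ l) := by
            simp only [← Finset.sum_add_distrib]
            exact Finset.sum_congr rfl fun k _ => Finset.sum_congr rfl fun l _ => by ring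
        _ = 2 * ∑ k ∈ window m j, χ k * (∑ l ∈ window m j, E j k l * (x0 l + a l)) := by
            rw [e1, e2]; ring
    rw [hvA]
    simp only
    rw [hsplit, abs_div, abs_of_pos hR]
    gcongr
    rw [abs_mul, abs_of_nonneg (by norm_num : (0:ℝ) ≤ 2)]
    linarith
  have hVB : ∀ j ∈ J, |vB j| ≤ Lmax / R := by
    intro j hj
    have huniq : ∀ k ∈ window m j, ∀ l ∈ window m j, χ k = 1 → χ l = 1 → k = l := by
      intro k hk l hl h h'
      exact window_unique N m i hm j k l hk hl h h'
    have hT : |∑ k ∈ window m j, χ k * D j k| ≤ Lmax :=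
      sum_indicator_abs_le (window m j) χ _ hχc huniq Lmax hLmaxpos.le
        (fun k hk => hLmax2 j hj k hk)
    rw [hvB]
    simp only
    rw [abs_div, abs_of_pos hR]
    gcongr
  have HA := softmax_linear_bounds β hβ J hJne wA vA (Lmax / R) hVA
  have HB := softmax_linear_bounds β hβ J hJne wA vB (Lmax / R) hVB
  obtain ⟨A1, A2, A3⟩ := HA
  obtain ⟨B1, B2, B3⟩ := HB
  rw [key_a, key_b]
  have hR2 : R ^ 2 = 2 * (m:ℝ) := Real.sq_sqrt (by positivity)
  refine ⟨?_, ?_, ?_⟩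
  · have habs := abs_add_le (deriv (fun s => softmax β J (fun j => wA j + s * vA j)) 0)
      (deriv (fun s => softmax β J (fun j => wA j + s * vB j)) 0)
    have heq : 2 * Lmax / R = Lmax / R + Lmax / R := by ring
    linarith
  · have habs := abs_add_le
      (deriv (deriv (fun s => softmax β J (fun j => wA j + s * vA j))) 0)
      (deriv (deriv (fun s => softmax β J (fun j => wA j + s * vB j))) 0)
    have heq : 4 * β * Lmax ^ 2 / (2 * (m:ℝ))
        = 2 * β * (Lmax / R) ^ 2 + 2 * β * (Lmax / R) ^ 2 := by
      rw [div_pow, hR2]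
      ring
    linarith
  · have habs := abs_add_le
      (deriv (deriv (deriv (fun s => softmax β J (fun j => wA j + s * vA j)))) 0)
      (deriv (deriv (deriv (fun s => softmax β J (fun j => wA j + s * vB j)))) 0)
    have heq : 12 * β ^ 2 * Lmax ^ 3 / R ^ 3
        = 6 * β ^ 2 * (Lmax / R) ^ 3 + 6 * β ^ 2 * (Lmax / R) ^ 3 := by
      rw [div_pow]
      ring
    linarith
end

section
/- Let d ≥ 1, let f_d(x) := (2π)^{−d/2} exp(−‖x‖²/2) denote the standard Gaussian density on ℝ^d, let x ∈ ℝ^d, and let v ∈ ℝ^d be a unit vector. Then ∫_0^∞ f_d(x + t v) dt ≥ f_d(x) / ( |⟨x, v⟩| + 1 ). -/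
open Finset

open MeasureTheory Filter Set Real Topology

lemma aux_tendsto (b A B C : ℝ) (hb : 0 < b) :
    Tendsto (fun t : ℝ => (A*t^2 + B*t + C) * Real.exp (-(b*t))) atTop (𝓝 0) := by
  have hH : Tendsto (fun s : ℝ => (A/b^2) * (s^2 * Real.exp (-s)) + ((B/b) * (s^1 * Real.exp (-s)) + C * (s^0 * Real.exp (-s)))) atTop (𝓝 ((A/b^2) * 0 + ((B/b) * 0 + C * 0))) :=
    (((tendsto_pow_mul_exp_neg_atTop_nhds_zero 2).const_mul _).add
      (((tendsto_pow_mul_exp_neg_atTop_nhds_zero 1).const_mul _).add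
      ((tendsto_pow_mul_exp_neg_atTop_nhds_zero 0).const_mul _)))
  simp only [mul_zero, add_zero] at hH
  have hcomp := hH.comp (Filter.tendsto_id.const_mul_atTop hb)
  convert hcomp using 2 with t
  simp only [Function.comp, id]
  field_simp
  ring

lemma key_ineq (a : ℝ) :
    1 / (|a| + 1) ≤ ∫ t in Set.Ioi (0:ℝ), Real.exp (-(t*a) - t^2/2) := by
  set b : ℝ := |a| + 1 with hbdef
  have hb1 : 1 ≤ b := le_add_of_nonneg_left (abs_nonneg a)
  have hb0 : 0 < b := lt_of_lt_of_le one_pos hb1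
  have hgeq : (fun t : ℝ => Real.exp (-(t*a) - t^2/2))
      = fun t => Real.exp (a^2/2) * Real.exp (-(1/2) * (t+a)^2) := by
    funext t; rw [← Real.exp_add]; ring_nf
  have hgint : IntegrableOn (fun t : ℝ => Real.exp (-(t*a) - t^2/2)) (Set.Ioi 0) := by
    rw [hgeq]
    exact (((integrable_exp_neg_mul_sq (by norm_num : (0:ℝ) < 1/2)).comp_add_right a).const_mul _).integrableOn
  set h : ℝ → ℝ := fun t => Real.exp (-(b*t)) * (1 + t - t^2/2) with hhdef
  have hcont : Continuous h :=
    (Real.continuous_exp.comp (continuous_const.mul continuous_id).neg).mul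
      ((continuous_const.add continuous_id).sub ((continuous_pow 2).div_const 2))
  have hbound : IntegrableOn (fun t : ℝ => 4 * Real.exp (-(1/2 : ℝ) * t)) (Set.Ioi (0:ℝ)) :=
    (exp_neg_integrableOn_Ioi 0 (by norm_num : (0:ℝ) < 1/2)).const_mul 4
  have hhint : IntegrableOn h (Set.Ioi 0) := by
    refine hbound.mono' hcont.aestronglyMeasurable.restrict ?_
    filter_upwards [ae_restrict_mem measurableSet_Ioi] with t ht
    have ht0 : 0 ≤ t := le_of_lt ht
    have h1 : |1 + t - t^2/2| ≤ 1 + t + t^2/2 := by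
      rw [abs_le]; constructor <;> nlinarith
    have hcube : Real.exp (t/2) = Real.exp (t/6)^3 := by
      rw [← Real.exp_nat_mul]; push_cast; ring_nf
    have he : (1 + t/6)^3 ≤ Real.exp (t/6)^3 :=
      pow_le_pow_left₀ (by positivity) (by linarith [Real.add_one_le_exp (t/6)]) 3
    have h2 : 1 + t + t^2/2 ≤ 4 * Real.exp (t/2) := by
      rw [hcube]
      nlinarith [mul_nonneg ht0 (sq_nonneg (t-9)), sq_nonneg (t - 3/2)]
    have h3 : Real.exp (-(b*t)) ≤ Real.exp (-t) := by
      apply Real.exp_le_exp.2; nlinarith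
    calc ‖h t‖ = Real.exp (-(b*t)) * |1 + t - t^2/2| := by
          rw [hhdef]; simp [abs_mul, abs_of_pos (Real.exp_pos _)]
      _ ≤ Real.exp (-t) * (4 * Real.exp (t/2)) :=
          mul_le_mul h3 (h1.trans h2) (abs_nonneg _) (Real.exp_nonneg _)
      _ = 4 * Real.exp (-(1/2 : ℝ) * t) := by rw [show (-(1/2:ℝ)*t) = -t + t/2 by ring, Real.exp_add]; ring
  set A : ℝ := 1/(2*b) with hA
  set B : ℝ := (1-b)/b^2 with hB
  set C : ℝ := (1-b-b^2)/b^3 with hC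
  have hbne : b ≠ 0 := ne_of_gt hb0
  have hderiv : ∀ t ∈ Set.Ici (0:ℝ),
      HasDerivAt (fun t : ℝ => (A*t^2 + B*t + C) * Real.exp (-(b*t))) (h t) t := by
    intro t _
    have h1 : HasDerivAt (fun t : ℝ => A*t^2 + B*t + C) (2*A*t + B) t := by
      have := (((hasDerivAt_pow 2 t).const_mul A).add ((hasDerivAt_id t).const_mul B)).add_const C
      exact this.congr_deriv (by ring)
    have h2 : HasDerivAt (fun t : ℝ => Real.exp (-(b*t))) (-b * Real.exp (-(b*t))) t := by
      have := (Real.hasDerivAt_exp (-(b*t))).comp t (((hasDerivAt_id t).const_mul b).neg)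
      exact this.congr_deriv (by ring)
    have := h1.mul h2
    refine this.congr_deriv ?_
    rw [hhdef]
    simp only [hA, hB, hC]
    field_simp
    ring
  have htend := aux_tendsto b A B C hb0
  have hint_eq : ∫ t in Set.Ioi (0:ℝ), h t = (b^2 + b - 1)/b^3 := by
    rw [integral_Ioi_of_hasDerivAt_of_tendsto' hderiv hhint htend]
    simp only [hA, hB, hC, mul_zero, neg_zero, Real.exp_zero]
    field_simp
    ring
  have hmono : ∫ t in Set.Ioi (0:ℝ), h t ≤ ∫ t in Set.Ioi (0:ℝ), Real.exp (-(t*a) - t^2/2) := by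
    apply setIntegral_mono_on hhint hgint measurableSet_Ioi
    intro t ht
    have ht0 : (0:ℝ) ≤ t := le_of_lt ht
    have h1 : 1 + t - t^2/2 ≤ Real.exp (t - t^2/2) := by
      have := Real.add_one_le_exp (t - t^2/2); linarith
    calc h t ≤ Real.exp (-(b*t)) * Real.exp (t - t^2/2) :=
          mul_le_mul_of_nonneg_left h1 (Real.exp_nonneg _)
      _ = Real.exp (-(b*t) + (t - t^2/2)) := by rw [← Real.exp_add]
      _ ≤ Real.exp (-(t*a) - t^2/2) := by
          apply Real.exp_le_exp.2
          have : a * t ≤ |a| * t := mul_le_mul_of_nonneg_right (le_abs_self a) ht0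
          nlinarith
  have hfinal : 1 / b ≤ (b^2 + b - 1)/b^3 := by
    rw [div_le_div_iff₀ hb0 (by positivity)]
    nlinarith
  calc 1 / (|a| + 1) = 1 / b := rfl
    _ ≤ (b^2 + b - 1)/b^3 := hfinal
    _ = ∫ t in Set.Ioi (0:ℝ), h t := hint_eq.symm
    _ ≤ _ := hmono
open Finset

/-- **Gaussian density integrated along a ray.** For the standard Gaussian density
`f_d(x) = (2π)^{-d/2} exp(-‖x‖²/2)` on `ℝ^d`, any point `x` and any unit vector `v`,
`∫_0^∞ f_d(x + t v) dt ≥ f_d(x) / (|⟨x, v⟩| + 1)`. -/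
theorem gaussian_density_ray_integral_lower_bound (d : ℕ) (hd : 1 ≤ d)
    (x v : Fin d → ℝ) (hv : ∑ i, (v i) ^ 2 = 1) :
    (2 * Real.pi) ^ (-(d : ℝ) / 2) * Real.exp (-(∑ i, (x i) ^ 2) / 2)
        / (|∑ i, x i * v i| + 1)
      ≤ ∫ t in Set.Ioi (0 : ℝ),
          (2 * Real.pi) ^ (-(d : ℝ) / 2)
            * Real.exp (-(∑ i, (x i + t * v i) ^ 2) / 2) := by
  set c : ℝ := (2 * Real.pi) ^ (-(d : ℝ) / 2) with hc
  set S : ℝ := ∑ i, (x i) ^ 2 with hS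
  set a : ℝ := ∑ i, x i * v i with ha
  have hcpos : 0 < c := Real.rpow_pos_of_pos (by positivity) _
  have hsum : ∀ t : ℝ, ∑ i, (x i + t * v i) ^ 2 = S + 2*t*a + t^2 := by
    intro t
    have : ∀ i, (x i + t * v i) ^ 2
        = (x i)^2 + (2*t) * (x i * v i) + t^2 * (v i)^2 := fun i => by ring
    rw [Finset.sum_congr rfl fun i _ => this i, Finset.sum_add_distrib,
      Finset.sum_add_distrib, ← Finset.mul_sum, ← Finset.mul_sum, ← ha, ← hS, hv]
    ring
  have heq : (fun t : ℝ => c * Real.exp (-(∑ i, (x i + t * v i) ^ 2) / 2))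
      = fun t : ℝ => (c * Real.exp (-S/2)) * Real.exp (-(t*a) - t^2/2) := by
    funext t
    rw [hsum t]
    have h2 : -(S + 2*t*a + t^2)/2 = -S/2 + (-(t*a) - t^2/2) := by ring
    rw [h2, Real.exp_add, mul_assoc]
  rw [heq, MeasureTheory.integral_const_mul]
  have hkey := key_ineq a
  have hpos : 0 < c * Real.exp (-S/2) := by positivity
  calc c * Real.exp (-S / 2) / (|a| + 1)
      = (c * Real.exp (-S/2)) * (1 / (|a| + 1)) := by ring
    _ ≤ (c * Real.exp (-S/2)) * ∫ t in Set.Ioi (0:ℝ), Real.exp (-(t*a) - t^2/2) :=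
        mul_le_mul_of_nonneg_left hkey hpos.le
end

section
/- Let m ≥ 1 and let μ, ŷ ∈ ℝ^m satisfy max_i |μ_i − ŷ_i| ≤ Δ_f. Let ε ∈ ℝ^m and v, e, E, E′ ≥ 0 satisfy max_i |ε_i| ≤ e, |(1/m) Σ_{i=1}^m ε_i| ≤ E, and |(1/m) Σ_{i=1}^m ε_i² − v| ≤ E′. Define the residuals ε̂_i := μ_i + ε_i − ŷ_i and the empirical variance V̂ := (1/m) Σ_{i=1}^m ( ε̂_i − (1/m) Σ_{k=1}^m ε̂_k )². Then |V̂ − v| ≤ Δ_f² + E′ + 2 Δ_f e + (Δ_f + E)². -/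
open Finset

lemma mean_abs_le' {m : ℕ} (hm : 1 ≤ m) (f : Fin m → ℝ) (B : ℝ)
    (hf : ∀ i, |f i| ≤ B) : |(1 / (m : ℝ)) * ∑ i, f i| ≤ B := by
  have hM : (0:ℝ) < (m:ℝ) := by exact_mod_cast hm
  have h1 : |∑ i, f i| ≤ (m:ℝ) * B := by
    calc |∑ i, f i| ≤ ∑ i, |f i| := Finset.abs_sum_le_sum_abs _ _
    _ ≤ ∑ _i : Fin m, B := Finset.sum_le_sum fun i _ => hf i
    _ = (m:ℝ) * B := by simp [Finset.sum_const, mul_comm]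
  rw [abs_mul, abs_of_pos (by positivity : (0:ℝ) < 1/(m:ℝ))]
  rw [div_mul_eq_mul_div, one_mul, div_le_iff₀ hM]
  linarith [h1]

/-- **Deterministic bound on the empirical variance of residuals.**
If `max_i |μ i - yh i| ≤ Δf`, `max_i |ε i| ≤ e`, `|(1/m) ∑ ε i| ≤ E` and
`|(1/m) ∑ (ε i)^2 - v| ≤ E'`, then the empirical variance `V̂` of the residuals
`ε̂ i = μ i + ε i - yh i` satisfies `|V̂ - v| ≤ Δf² + E' + 2 Δf e + (Δf + E)²`. -/
theorem empirical_variance_of_residuals_close (m : ℕ) (hm : 1 ≤ m)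
    (μ yh ε : Fin m → ℝ) (Δf v e E E' : ℝ)
    (hv : 0 ≤ v) (he : 0 ≤ e) (hE : 0 ≤ E) (hE' : 0 ≤ E')
    (hΔf : ∀ i, |μ i - yh i| ≤ Δf)
    (hε : ∀ i, |ε i| ≤ e)
    (hmean : |(1 / (m : ℝ)) * ∑ i, ε i| ≤ E)
    (hvar : |(1 / (m : ℝ)) * ∑ i, (ε i) ^ 2 - v| ≤ E') :
    |(1 / (m : ℝ)) * ∑ i, ((μ i + ε i - yh i)
        - (1 / (m : ℝ)) * ∑ k, (μ k + ε k - yh k)) ^ 2 - v|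
      ≤ Δf ^ 2 + E' + 2 * Δf * e + (Δf + E) ^ 2 := by
  have hM : (0:ℝ) < (m:ℝ) := by exact_mod_cast hm
  have hΔ0 : 0 ≤ Δf := le_trans (abs_nonneg _) (hΔf ⟨0, hm⟩)
  set d : Fin m → ℝ := fun i => μ i - yh i with hd
  set c : ℝ := (1 / (m:ℝ)) * ∑ k, (μ k + ε k - yh k) with hc
  -- expand
  have e1 : ∑ i, ((μ i + ε i - yh i) - c)^2
      = (∑ i, (d i)^2) + 2 * (∑ i, d i * ε i) + (∑ i, (ε i)^2)
        - 2*c*(∑ i, (μ i + ε i - yh i)) + (m:ℝ) * c^2 := by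
    have h : ∀ i : Fin m, ((μ i + ε i - yh i) - c)^2
        = ((d i)^2 + 2*(d i * ε i) + (ε i)^2) - 2*c*(μ i + ε i - yh i) + c^2 := by
      intro i; simp only [hd]; ring
    rw [Finset.sum_congr rfl fun i _ => h i]
    rw [Finset.sum_add_distrib, Finset.sum_sub_distrib, Finset.sum_add_distrib,
      Finset.sum_add_distrib, ← Finset.mul_sum, ← Finset.mul_sum,
      Finset.sum_const, Finset.card_univ]
    simp [Fintype.card_fin]
  have hsum : ∑ k, (μ k + ε k - yh k) = (m:ℝ) * c := by
    rw [hc]; field_simp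
  have key : (1 / (m:ℝ)) * ∑ i, ((μ i + ε i - yh i) - c)^2 - v
      = (1/(m:ℝ)) * (∑ i, (d i)^2) + 2 * ((1/(m:ℝ)) * (∑ i, d i * ε i))
        + ((1/(m:ℝ)) * (∑ i, (ε i)^2) - v) - c^2 := by
    rw [e1, hsum]; field_simp; ring
  rw [key]
  have b1 : |(1/(m:ℝ)) * (∑ i, (d i)^2)| ≤ Δf^2 := by
    apply mean_abs_le' hm
    intro i
    rw [abs_of_nonneg (sq_nonneg _)]
    calc (d i)^2 = |d i|^2 := (sq_abs _).symm
    _ ≤ Δf^2 := by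
        apply pow_le_pow_left₀ (abs_nonneg _) (hΔf i)
  have b2 : |(1/(m:ℝ)) * (∑ i, d i * ε i)| ≤ Δf * e := by
    apply mean_abs_le' hm
    intro i
    rw [abs_mul]
    exact mul_le_mul (hΔf i) (hε i) (abs_nonneg _) hΔ0
  have b4 : |c| ≤ Δf + E := by
    have : c = (1/(m:ℝ)) * (∑ i, d i) + (1/(m:ℝ)) * (∑ i, ε i) := by
      rw [hc, ← mul_add, ← Finset.sum_add_distrib]
      congr 1
      exact Finset.sum_congr rfl fun i _ => by simp only [hd]; ring
    rw [this]
    refine le_trans (abs_add_le _ _) (add_le_add ?_ hmean)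
    exact mean_abs_le' hm d Δf hΔf
  have b4' : c^2 ≤ (Δf + E)^2 := by
    calc c^2 = |c|^2 := (sq_abs _).symm
    _ ≤ (Δf + E)^2 := pow_le_pow_left₀ (abs_nonneg _) b4 2
  set A := (1/(m:ℝ)) * (∑ i, (d i)^2)
  set B := (1/(m:ℝ)) * (∑ i, d i * ε i)
  set C := (1/(m:ℝ)) * (∑ i, (ε i)^2) - v
  have h1 : |A + 2*B + C - c^2| ≤ |A + 2*B + C| + |c^2| := abs_sub _ _
  have h2 : |A + 2*B + C| ≤ |A + 2*B| + |C| := abs_add_le _ _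
  have h3 : |A + 2*B| ≤ |A| + |2*B| := abs_add_le _ _
  have h4 : |2*B| = 2*|B| := by rw [abs_mul, abs_two]
  have h5 : |c^2| = c^2 := abs_of_nonneg (sq_nonneg c)
  linarith
end
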